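/- Let κ be regular with 2^{<κ} = κ, let λ ≥ κ, and suppose F is a κ-coherent collection of injective partial functions from λ to κ closed under restrictions, such that for each z ⊆ λ of size ≤ κ some f ∈ F has domain z. If g : κ → 2 is any function such that for every f ∈ F, both {α ∈ κ \ ran(f) : g(α) = 0} and {α ∈ κ \ ran(f) : g(α) = 1} have size κ, then the family G generated by {g ∘ f : f ∈ F} by closing under subsets and < κ modifications is a coherent (κ⁺, λ, 2)-forest closed under < κ modifications, in which two elements are compatible iff they agree on their common domain. -/

import Mathlib

open Cardinal Set
open scoped Classical

universe u v

namespace ForestPaper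

variable {X : Type u} {μ : Type v}

/-- The domain of a partial function represented as an `Option`-valued function. -/
def pdom (f : X → Option μ) : Set X := {x | f x ≠ none}

/-- The range of a partial function. -/
def pran (f : X → Option μ) : Set μ := {y | ∃ x, f x = some y}

/-- `Ext g f` means the partial function `g` extends `f`. -/
def Ext (g f : X → Option μ) : Prop := ∀ x, f x ≠ none → g x = f x

/-- Restriction of a partial function to a set. -/
noncomputable def pres (f : X → Option μ) (z : Set X) : X → Option μ :=
  fun x => if x ∈ z then f x else none

/-- The set of points of the common domain where `f` and `g` disagree. -/
def pdiff (f g : X → Option μ) : Set X :=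
  {x | f x ≠ none ∧ g x ≠ none ∧ f x ≠ g x}

/-- `f` and `g` agree on their common domain. -/
def Agree (f g : X → Option μ) : Prop :=
  ∀ x, f x ≠ none → g x ≠ none → f x = g x

/-- Two members of `F` are compatible if they have a common extension in `F`. -/
def Compat (F : Set (X → Option μ)) (f g : X → Option μ) : Prop :=
  ∃ h ∈ F, Ext h f ∧ Ext h g

/-- `A` is an antichain in `F`: a pairwise incompatible subset of `F`. -/
def IsAntichainIn (F A : Set (X → Option μ)) : Prop :=
  A ⊆ F ∧ ∀ f ∈ A, ∀ g ∈ A, f ≠ g → ¬ Compat F f g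

/-- `A` is a maximal antichain in `F`. -/
def IsMaxAntichainIn (F A : Set (X → Option μ)) : Prop :=
  IsAntichainIn F A ∧ ∀ f ∈ F, ∃ g ∈ A, Compat F f g

/-- A `(c, X, μ)`-forest: a collection of partial functions from `X` to `μ` whose
domains are exactly the subsets of `X` of size `< c`, with coherent restrictions
between levels (every restriction of a member is a member, and every member
extends to any larger admissible domain). -/
structure IsForest (c : Cardinal.{u}) (F : Set (X → Option μ)) : Prop where
  dom_small : ∀ f ∈ F, #(pdom f) < c
  exists_dom : ∀ z : Set X, #z < c → ∃ f ∈ F, pdom f = z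
  restrict_mem : ∀ f ∈ F, ∀ z : Set X, z ⊆ pdom f → pres f z ∈ F
  extend_mem : ∀ f ∈ F, ∀ z : Set X, #z < c → pdom f ⊆ z →
    ∃ g ∈ F, pdom g = z ∧ Ext g f

/-- A family is `κ`-coherent when any two members disagree at `< κ` many points
of their common domain. -/
def Coherent (κ : Cardinal.{u}) (F : Set (X → Option μ)) : Prop :=
  ∀ f ∈ F, ∀ g ∈ F, #(pdiff f g) < κ

/-- `F` is closed under modifications at `< κ` many points. -/
def ClosedMod (κ : Cardinal.{u}) (F : Set (X → Option μ)) : Prop :=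
  ∀ f ∈ F, ∀ f' : X → Option μ, pdom f' = pdom f →
    #{x | f x ≠ f' x} < κ → f' ∈ F

/-- A partial function is injective (on its domain). -/
def PInj (f : X → Option μ) : Prop :=
  ∀ x y, f x ≠ none → f x = f y → x = y

/-- A partial function is `< κ`-to-1: every fiber has size `< κ`. -/
def SmallTo1 (κ : Cardinal.{u}) (f : X → Option μ) : Prop :=
  ∀ y : μ, #{x | f x = some y} < κ

/-- `F` contains a `⊆`-well-ordered chain of order type `o`. -/
def HasChain (o : Ordinal.{u}) (F : Set (X → Option μ)) : Prop :=
  ∃ c : o.ToType → (X → Option μ), (∀ i, c i ∈ F) ∧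
    ∀ i j, i < j → Ext (c j) (c i) ∧ c i ≠ c j

/-- The family generated by the compositions `g ∘ f` for `f ∈ F`, closed under
subsets and `< κ` modifications. -/
def genG {X : Type u} (κ : Cardinal.{u}) (F : Set (X → Option κ.ord.ToType))
    (g : κ.ord.ToType → Bool) : Set (X → Option Bool) :=
  {h | ∃ f ∈ F, pdom h ⊆ pdom f ∧
    #({x | h x ≠ none ∧ h x ≠ (f x).map g} : Set X) < κ}

/-- Composing a coherent family of injections with a sufficiently generic
two-valued function `g` and closing under subsets and `< κ` modifications yields
a coherent `(κ⁺,λ,2)`-forest, closed under `< κ` modifications, in which two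
elements are compatible iff they agree on their common domain. -/
theorem stmt19 {X : Type u} (κ : Cardinal.{u}) (hκ : κ.IsRegular)
    (hpow : (2 : Cardinal.{u}) ^< κ = κ) (hX : κ ≤ #X)
    (F : Set (X → Option κ.ord.ToType))
    (hdom : ∀ f ∈ F, #(pdom f) ≤ κ)
    (hcoh : ∀ f ∈ F, ∀ g ∈ F, #(pdiff f g) < κ)
    (hinj : ∀ f ∈ F, PInj f)
    (hres : ∀ f ∈ F, ∀ z : Set X, pres f z ∈ F)
    (hex : ∀ z : Set X, #z ≤ κ → ∃ f ∈ F, pdom f = z)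
    (g : κ.ord.ToType → Bool)
    (hg : ∀ f ∈ F, ∀ b : Bool,
      #({α | α ∉ pran f ∧ g α = b} : Set κ.ord.ToType) = κ) :
    IsForest (Order.succ κ) (genG κ F g) ∧
    Coherent κ (genG κ F g) ∧
    ClosedMod κ (genG κ F g) ∧
    ∀ h₁ ∈ genG κ F g, ∀ h₂ ∈ genG κ F g,
      ((∃ h ∈ genG κ F g, Ext h h₁ ∧ Ext h h₂) ↔ Agree h₁ h₂) := by
  classical
  have hκ0 : ℵ₀ ≤ κ := hκ.aleph0_le
  have hlt : ∀ {c : Cardinal.{u}}, c < Order.succ κ ↔ c ≤ κ := fun {c} => Order.lt_succ_iff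
  have hmapdom : ∀ (f : X → Option κ.ord.ToType) (x : X),
      ((f x).map g ≠ none) ↔ f x ≠ none := by
    intro f x
    constructor
    · intro h hn; exact h (by rw [hn]; rfl)
    · intro h hn; exact h (Option.map_eq_none_iff.mp hn)
  -- transfer lemma: the witness can be replaced by any f' ∈ F whose domain covers pdom h
  have transfer : ∀ (h : X → Option Bool), ∀ f₁ ∈ F, ∀ f₂ ∈ F, pdom h ⊆ pdom f₂ →
      #({x | h x ≠ none ∧ h x ≠ (f₁ x).map g} : Set X) < κ →
      #({x | h x ≠ none ∧ h x ≠ (f₂ x).map g} : Set X) < κ := by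
    intro h f₁ hf₁ f₂ hf₂ hsub hsmall
    have hsub2 : ({x | h x ≠ none ∧ h x ≠ (f₂ x).map g} : Set X) ⊆
        {x | h x ≠ none ∧ h x ≠ (f₁ x).map g} ∪ pdiff f₁ f₂ := by
      intro x hx
      by_cases hc : h x = (f₁ x).map g
      · right
        refine ⟨?_, hsub hx.1, ?_⟩
        · intro hn; apply hx.1; rw [hc, hn]; rfl
        · intro he; exact hx.2 (by rw [hc, he])
      · left; exact ⟨hx.1, hc⟩
    calc #({x | h x ≠ none ∧ h x ≠ (f₂ x).map g} : Set X)
        ≤ #(({x | h x ≠ none ∧ h x ≠ (f₁ x).map g} : Set X) ∪ pdiff f₁ f₂ : Set X) :=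
          mk_le_mk_of_subset hsub2
      _ ≤ #({x | h x ≠ none ∧ h x ≠ (f₁ x).map g} : Set X) + #(pdiff f₁ f₂) :=
          mk_union_le _ _
      _ < κ := Cardinal.add_lt_of_lt hκ0 hsmall (hcoh f₁ hf₁ f₂ hf₂)
  have hclosed : ClosedMod κ (genG κ F g) := by
    intro h hh h' hdom' hmod
    obtain ⟨f, hf, hs, hsm⟩ := hh
    refine ⟨f, hf, hdom'.le.trans hs, ?_⟩
    have hsub2 : ({x | h' x ≠ none ∧ h' x ≠ (f x).map g} : Set X) ⊆
        {x | h x ≠ none ∧ h x ≠ (f x).map g} ∪ {x | h x ≠ h' x} := by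
      intro x hx
      by_cases hc : h x = h' x
      · left; exact ⟨by rw [hc]; exact hx.1, by rw [hc]; exact hx.2⟩
      · right; exact hc
    calc #({x | h' x ≠ none ∧ h' x ≠ (f x).map g} : Set X)
        ≤ #(({x | h x ≠ none ∧ h x ≠ (f x).map g} : Set X) ∪ {x | h x ≠ h' x} : Set X) :=
          mk_le_mk_of_subset hsub2
      _ ≤ _ + _ := mk_union_le _ _
      _ < κ := Cardinal.add_lt_of_lt hκ0 hsm hmod
  have hcohG : Coherent κ (genG κ F g) := by
    intro h₁ hh₁ h₂ hh₂
    obtain ⟨f₁, hf₁, hs₁, hm₁⟩ := hh₁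
    obtain ⟨f₂, hf₂, hs₂, hm₂⟩ := hh₂
    have hsub2 : pdiff h₁ h₂ ⊆
        ({x | h₁ x ≠ none ∧ h₁ x ≠ (f₁ x).map g} : Set X) ∪
        (({x | h₂ x ≠ none ∧ h₂ x ≠ (f₂ x).map g} : Set X) ∪ pdiff f₁ f₂) := by
      intro x hx
      obtain ⟨hx1, hx2, hx3⟩ := hx
      by_cases hc1 : h₁ x = (f₁ x).map g
      · by_cases hc2 : h₂ x = (f₂ x).map g
        · right; right
          refine ⟨?_, ?_, ?_⟩
          · intro hn; apply hx1; rw [hc1, hn]; rfl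
          · intro hn; apply hx2; rw [hc2, hn]; rfl
          · intro he; exact hx3 (by rw [hc1, hc2, he])
        · right; left; exact ⟨hx2, hc2⟩
      · left; exact ⟨hx1, hc1⟩
    calc #(pdiff h₁ h₂)
        ≤ _ := mk_le_mk_of_subset hsub2
      _ ≤ _ + #((({x | h₂ x ≠ none ∧ h₂ x ≠ (f₂ x).map g} : Set X) ∪ pdiff f₁ f₂ : Set X)) :=
          mk_union_le _ _
      _ ≤ _ + (_ + _) := add_le_add le_rfl (mk_union_le _ _)
      _ < κ := Cardinal.add_lt_of_lt hκ0 hm₁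
          (Cardinal.add_lt_of_lt hκ0 hm₂ (hcoh f₁ hf₁ f₂ hf₂))
  refine ⟨⟨?_, ?_, ?_, ?_⟩, hcohG, hclosed, ?_⟩
  · -- dom_small
    rintro h ⟨f, hf, hs, -⟩
    exact hlt.2 ((mk_le_mk_of_subset hs).trans (hdom f hf))
  · -- exists_dom
    intro z hz
    obtain ⟨f, hf, hdf⟩ := hex z (hlt.1 hz)
    refine ⟨fun x => (f x).map g, ⟨f, hf, ?_, ?_⟩, ?_⟩
    · intro x hx; exact (hmapdom f x).mp hx
    · have : ({x | (f x).map g ≠ none ∧ (f x).map g ≠ (f x).map g} : Set X) = ∅ := by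
        ext x; simp
      rw [this]
      simpa using hκ.pos
    · rw [← hdf]; ext x; exact hmapdom f x
  · -- restrict_mem
    rintro h ⟨f, hf, hs, hsm⟩ z hz
    have hpres : ∀ x, pres h z x ≠ none → pres h z x = h x := by
      intro x hx
      by_cases hxz : x ∈ z
      · simp [pres, hxz]
      · exact absurd (by simp [pres, hxz]) hx
    refine ⟨f, hf, ?_, ?_⟩
    · intro x hx
      have hx' : pres h z x ≠ none := hx
      apply hs
      show h x ≠ none
      rw [← hpres x hx']
      exact hx'
    · refine lt_of_le_of_lt (mk_le_mk_of_subset ?_) hsm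
      intro x hx
      exact ⟨by rw [← hpres x hx.1]; exact hx.1, by rw [← hpres x hx.1]; exact hx.2⟩
  · -- extend_mem
    rintro h ⟨f, hf, hs, hsm⟩ z hz hdz
    obtain ⟨f', hf', hdf'⟩ := hex z (hlt.1 hz)
    have hsub' : pdom h ⊆ pdom f' := by rw [hdf']; exact hdz
    set h' : X → Option Bool := fun x => if h x ≠ none then h x else (f' x).map g with hh'
    have hdom' : pdom h' = z := by
      ext x
      constructor
      · intro hx
        by_cases hc : h x ≠ none
        · exact hdz hc
        · rw [← hdf']
          exact (hmapdom f' x).mp (by simpa [pdom, hh', not_not.mp hc] using hx)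
      · intro hx
        by_cases hc : h x ≠ none
        · simpa [pdom, hh', hc] using hc
        · have : f' x ≠ none := by rw [← hdf'] at hx; exact hx
          simpa [pdom, hh', not_not.mp hc] using (hmapdom f' x).mpr this
    refine ⟨h', ⟨f', hf', ?_, ?_⟩, hdom', ?_⟩
    · rw [hdom', hdf']
    · refine lt_of_le_of_lt (mk_le_mk_of_subset ?_)
        (transfer h f hf f' hf' hsub' hsm)
      intro x hx
      by_cases hc : h x ≠ none
      · exact ⟨hc, by rw [show h x = h' x by simp [hh', hc]]; exact hx.2⟩
      · exact absurd (by simp [hh', hc]) hx.2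
    · intro x hx
      simp [hh', hx]
  · -- compatible iff agree
    intro h₁ hh₁ h₂ hh₂
    constructor
    · rintro ⟨h, -, e₁, e₂⟩ x hx1 hx2
      exact (e₁ x hx1).symm.trans (e₂ x hx2)
    · intro hag
      obtain ⟨f₁, hf₁, hs₁, hm₁⟩ := hh₁
      obtain ⟨f₂, hf₂, hs₂, hm₂⟩ := hh₂
      have hzκ : #(pdom h₁ ∪ pdom h₂ : Set X) ≤ κ := by
        calc #(pdom h₁ ∪ pdom h₂ : Set X) ≤ #(pdom h₁) + #(pdom h₂) := mk_union_le _ _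
          _ ≤ κ + κ := add_le_add ((mk_le_mk_of_subset hs₁).trans (hdom f₁ hf₁))
              ((mk_le_mk_of_subset hs₂).trans (hdom f₂ hf₂))
          _ = κ := Cardinal.add_eq_self hκ0
      obtain ⟨f, hf, hdf⟩ := hex (pdom h₁ ∪ pdom h₂) hzκ
      set H : X → Option Bool := fun x => if h₁ x ≠ none then h₁ x else h₂ x with hH
      have hHd : pdom H ⊆ pdom f := by
        rw [hdf]
        intro x hx
        by_cases hc : h₁ x ≠ none
        · exact Or.inl hc
        · exact Or.inr (by simpa [pdom, hH, not_not.mp hc] using hx)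
      have hsub1 : pdom h₁ ⊆ pdom f := by rw [hdf]; exact subset_union_left
      have hsub2 : pdom h₂ ⊆ pdom f := by rw [hdf]; exact subset_union_right
      refine ⟨H, ⟨f, hf, hHd, ?_⟩, ?_, ?_⟩
      · have hsubH : ({x | H x ≠ none ∧ H x ≠ (f x).map g} : Set X) ⊆
            ({x | h₁ x ≠ none ∧ h₁ x ≠ (f x).map g} : Set X) ∪
            ({x | h₂ x ≠ none ∧ h₂ x ≠ (f x).map g} : Set X) := by
          intro x hx
          by_cases hc : h₁ x ≠ none
          · left; exact ⟨hc, by rw [show h₁ x = H x by simp [hH, hc]]; exact hx.2⟩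
          · right
            have hHx : H x = h₂ x := by simp [hH, hc]
            exact ⟨by rw [← hHx]; exact hx.1, by rw [← hHx]; exact hx.2⟩
        calc #({x | H x ≠ none ∧ H x ≠ (f x).map g} : Set X)
            ≤ _ := mk_le_mk_of_subset hsubH
          _ ≤ _ + _ := mk_union_le _ _
          _ < κ := Cardinal.add_lt_of_lt hκ0
              (transfer h₁ f₁ hf₁ f hf hsub1 hm₁)
              (transfer h₂ f₂ hf₂ f hf hsub2 hm₂)
      · intro x hx; simp [hH, hx]
      · intro x hx
        by_cases hc : h₁ x ≠ none
        · rw [show H x = h₁ x by simp [hH, hc]]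
          exact hag x hc hx
        · simp [hH, hc]
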